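/- For every nonnegative integer n, the two-variable exponential generating function \sum_{l,m\ge 0} \mathscr{B}_m^{(-l)}(n) x^l y^m/(l! m!) equals n! e^{x+y}/(e^x + e^y - e^{x+y})^{n+1}, where \mathscr{B}_m^{(-l)}(n) = \sum_{j=0}^{n} [n choose_1 j] B_m^{(-l-j)}(n). -/

import Mathlib

open PowerSeries Finset

/-- Unsigned Stirling numbers of the first kind. -/
def stirling1 : ℕ → ℕ → ℕ
  | 0, 0 => 1
  | 0, _ + 1 => 0
  | _ + 1, 0 => 0
  | n + 1, m + 1 => stirling1 n m + n * stirling1 n (m + 1)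

/-- Stirling numbers of the second kind. -/
def stirling2 : ℕ → ℕ → ℕ
  | 0, 0 => 1
  | 0, _ + 1 => 0
  | _ + 1, 0 => 0
  | n + 1, m + 1 => stirling2 n m + (m + 1) * stirling2 n (m + 1)

/-- e^t as a formal power series over ℚ. -/
noncomputable def expQ : PowerSeries ℚ := PowerSeries.exp ℚ

/-- e^{-t} as a formal power series over ℚ. -/
noncomputable def expNegQ : PowerSeries ℚ := rescale (-1) expQ

/-- The formal power series Li_k(1-e^{-t})/(1-e^{-t}) = ∑_{m≥0} (m+1)^{-k} (1-e^{-t})^m,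
  defined coefficientwise (the tail vanishes since (1-e^{-t})^m has order m). -/
noncomputable def liEGF (k : ℤ) : PowerSeries ℚ :=
  PowerSeries.mk fun j =>
    ∑ m ∈ range (j + 1), ((m : ℚ) + 1) ^ (-k) * coeff (R := ℚ) j ((1 - expNegQ) ^ m)

/-- EGF of the poly-Bernoulli polynomials: e^{-xt} Li_k(1-e^{-t})/(1-e^{-t}). -/
noncomputable def pbEGF (k : ℤ) (x : ℚ) : PowerSeries ℚ := rescale (-x) expQ * liEGF k

/-- Poly-Bernoulli polynomial value B_m^{(k)}(x). -/
noncomputable def pbPoly (k : ℤ) (x : ℚ) (m : ℕ) : ℚ := m.factorial * coeff (R := ℚ) m (pbEGF k x)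

/-- Poly-Bernoulli number B_m^{(k)}. -/
noncomputable def pbB (k : ℤ) (m : ℕ) : ℚ := pbPoly k 0 m

/-- Poly-Bernoulli number C_m^{(k)}. -/
noncomputable def pbC (k : ℤ) (m : ℕ) : ℚ := pbPoly k 1 m

/-- 𝓑_m^{(-l)}(n) = ∑_{j=0}^n [n j] B_m^{(-l-j)}(n). -/
noncomputable def scrB (l m n : ℕ) : ℚ :=
  ∑ j ∈ range (n + 1), (stirling1 n j : ℚ) * pbPoly (-(l : ℤ) - j) n m

/-- e^x, viewed in ℚ[[x]][[y]] (a series in x, constant in y). -/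
noncomputable def eX : PowerSeries (PowerSeries ℚ) := PowerSeries.C (R := PowerSeries ℚ) expQ

/-- e^y, viewed in ℚ[[x]][[y]]. -/
noncomputable def eY : PowerSeries (PowerSeries ℚ) := PowerSeries.exp (PowerSeries ℚ)

/-!
Expanding `Li_{-k}(1 - e^{-y}) / (1 - e^{-y}) = ∑ᵢ (i + 1)^k (1 - e^{-y})^i` and using
`∑ⱼ [n j] (i + 1)^j = (i + 1)(i + 2)⋯(i + n) = n! C(n + i, n)`, the generating function
becomes `n! e^x e^{-ny} ∑ᵢ C(n + i, n) zⁱ = n! e^x e^{-ny} / (1 - z)^{n+1}` with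
`z = e^x (1 - e^{-y})`, and `e^y (1 - z) = e^x + e^y - e^{x+y}`. The `i`-th term of the sum is
divisible by `yⁱ`, so the infinite sums are handled by comparing truncations modulo `y^N` for
every `N`.
-/

theorem stirling1_eq_stirlingFirst : ∀ n k, stirling1 n k = Nat.stirlingFirst n k
  | 0, 0 => rfl
  | 0, _ + 1 => rfl
  | _ + 1, 0 => rfl
  | n + 1, k + 1 => by
    rw [stirling1, Nat.stirlingFirst_succ_succ, stirling1_eq_stirlingFirst n k,
      stirling1_eq_stirlingFirst n (k + 1), add_comm]

theorem Nat.sum_stirlingFirst_mul_pow {R : Type*} [CommSemiring R] (n : ℕ) (x : R) :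
    ∑ k ∈ range (n + 1), (stirlingFirst n k : R) * x ^ k = ∏ i ∈ range n, (x + i) := by
  induction n with
  | zero => simp
  | succ n ih =>
    have hshift : ∑ k ∈ range (n + 1), (stirlingFirst n (k + 1) : R) * x ^ (k + 1) +
        stirlingFirst n 0 = ∑ k ∈ range (n + 1), (stirlingFirst n k : R) * x ^ k := by
      rw [sum_range_succ, sum_range_succ' _ n, stirlingFirst_eq_zero_of_lt n.lt_succ_self]
      simp
    have h0 : (n : R) * stirlingFirst n 0 = 0 := by cases n <;> simp
    calc ∑ k ∈ range (n + 1 + 1), (stirlingFirst (n + 1) k : R) * x ^ k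
        = ∑ k ∈ range (n + 1), ((n : R) * (stirlingFirst n (k + 1) * x ^ (k + 1)) +
            x * (stirlingFirst n k * x ^ k)) := by
          rw [sum_range_succ']
          simp only [stirlingFirst_succ_succ, stirlingFirst_succ_zero, Nat.cast_add,
            Nat.cast_mul, Nat.cast_zero, zero_mul, add_zero]
          exact sum_congr rfl fun k _ => by ring
      _ = n * (∑ k ∈ range (n + 1), (stirlingFirst n (k + 1) : R) * x ^ (k + 1) +
            stirlingFirst n 0) + x * ∑ k ∈ range (n + 1), (stirlingFirst n k : R) * x ^ k := by
          rw [mul_add, h0, add_zero, sum_add_distrib, mul_sum, mul_sum]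
      _ = ∏ i ∈ range (n + 1), (x + i) := by
          rw [hshift, ih, prod_range_succ]
          ring

namespace PowerSeries

variable {R : Type*} [CommRing R]

theorem eq_of_forall_X_pow_dvd_sub {f g : R⟦X⟧} (h : ∀ N, X ^ N ∣ f - g) : f = g := by
  ext m
  rw [← sub_eq_zero, ← map_sub]
  exact X_pow_dvd_iff.mp (h (m + 1)) m m.lt_succ_self

theorem coeff_mul_eq_of_X_pow_dvd_sub {g h : R⟦X⟧} {m : ℕ} (hgh : X ^ (m + 1) ∣ g - h)
    (f : R⟦X⟧) : coeff m (f * g) = coeff m (f * h) := by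
  rw [← sub_eq_zero, ← map_sub, ← mul_sub]
  exact X_pow_dvd_iff.mp (hgh.mul_left f) m m.lt_succ_self

theorem X_pow_dvd_sub_sum_range {a : ℕ → R⟦X⟧} (ha : ∀ i, X ^ i ∣ a i) {f : R⟦X⟧}
    (hf : ∀ j, coeff j f = ∑ i ∈ range (j + 1), coeff j (a i)) (N : ℕ) :
    X ^ N ∣ f - ∑ i ∈ range N, a i := by
  refine X_pow_dvd_iff.mpr fun j hj => ?_
  rw [map_sub, map_sum, hf, sub_eq_zero]
  refine sum_subset (range_subset_range.mpr hj) fun i _ hij => ?_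
  exact X_pow_dvd_iff.mp (ha i) j (by simpa using hij)

end PowerSeries

theorem Polynomial.X_pow_dvd_trunc_choose_mul_one_sub_pow_sub_one (n N : ℕ) :
    (X : Polynomial ℤ) ^ N ∣
      trunc N (PowerSeries.mk fun i => ((n + i).choose n : ℤ)) * (1 - X) ^ (n + 1) - 1 := by
  set F : PowerSeries ℤ := PowerSeries.mk fun i => ((n + i).choose n : ℤ)
  have hF : F * (1 - PowerSeries.X) ^ (n + 1) = 1 := by
    simpa using PowerSeries.mk_add_choose_mul_one_sub_pow_eq_one ℤ n
  have hps : PowerSeries.X ^ N ∣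
      ((trunc N F * (1 - X) ^ (n + 1) - 1 : Polynomial ℤ) : PowerSeries ℤ) := by
    have htail : PowerSeries.X ^ N ∣ F - (trunc N F : PowerSeries ℤ) :=
      ⟨_, sub_eq_of_eq_add (eq_X_pow_mul_shift_add_trunc N F)⟩
    rw [Polynomial.coe_sub, Polynomial.coe_mul, Polynomial.coe_pow, Polynomial.coe_sub,
      Polynomial.coe_one, Polynomial.coe_X,
      show (trunc N F : PowerSeries ℤ) * (1 - PowerSeries.X) ^ (n + 1) - 1 =
          -((F - (trunc N F : PowerSeries ℤ)) * (1 - PowerSeries.X) ^ (n + 1)) by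
        linear_combination hF]
    exact dvd_neg.mpr (htail.mul_right _)
  refine Polynomial.X_pow_dvd_iff.mpr fun d hd => ?_
  rw [← Polynomial.coeff_coe]
  exact PowerSeries.X_pow_dvd_iff.mp hps d hd

theorem pow_dvd_sum_choose_mul_one_sub_pow_sub_one {A : Type*} [CommRing A] (z : A) (n N : ℕ) :
    z ^ N ∣ (∑ i ∈ range N, ((n + i).choose n : A) * z ^ i) * (1 - z) ^ (n + 1) - 1 := by
  have := map_dvd (Polynomial.aeval z)
    (Polynomial.X_pow_dvd_trunc_choose_mul_one_sub_pow_sub_one n N)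
  simpa only [map_sub, map_mul, map_pow, map_one, Polynomial.aeval_X, Polynomial.aeval_def,
    Polynomial.eval₂_X, eval₂_trunc_eq_sum_range, coeff_mk, eq_intCast, Int.cast_natCast]
    using this

theorem expNegQ_pow (k : ℕ) : expNegQ ^ k = rescale (-(k : ℚ)) expQ := by
  rw [expNegQ, ← map_pow, expQ, exp_pow_eq_rescale_exp, rescale_rescale]
  norm_num

theorem coeff_expQ_pow (k l : ℕ) : coeff l (expQ ^ k) = (k : ℚ) ^ l / l.factorial := by
  rw [expQ, exp_pow_eq_rescale_exp, coeff_rescale, coeff_exp]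
  simp [div_eq_mul_inv]

theorem X_dvd_one_sub_expNegQ : X ∣ 1 - expNegQ := by
  rw [X_dvd_iff, map_sub, map_one, ← coeff_zero_eq_constantCoeff_apply, expNegQ, coeff_rescale,
    expQ, coeff_exp]
  simp

theorem coeff_mul_liEGF_neg (f : ℚ⟦X⟧) (k m : ℕ) :
    coeff m (f * liEGF (-k)) =
      ∑ i ∈ range (m + 1), ((i : ℚ) + 1) ^ k * coeff m (f * (1 - expNegQ) ^ i) := by
  have htrunc := X_pow_dvd_sub_sum_range (f := liEGF (-k))
    (a := fun i => C (((i : ℚ) + 1) ^ k) * (1 - expNegQ) ^ i)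
    (fun i => (pow_dvd_pow_of_dvd X_dvd_one_sub_expNegQ i).mul_left _)
    (fun j => by simp only [liEGF, coeff_mk, coeff_C_mul, neg_neg, zpow_natCast]) (m + 1)
  rw [coeff_mul_eq_of_X_pow_dvd_sub htrunc, mul_sum, map_sum]
  refine sum_congr rfl fun i _ => ?_
  rw [mul_left_comm, coeff_C_mul]

theorem scrB_eq_sum (l m n : ℕ) :
    scrB l m n = m.factorial * ∑ i ∈ range (m + 1),
      ((i + 1).ascFactorial n : ℚ) * ((i : ℚ) + 1) ^ l *
        coeff m (expNegQ ^ n * (1 - expNegQ) ^ i) := by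
  have hexp (j : ℕ) : -(l : ℤ) - j = -((l + j : ℕ) : ℤ) := by push_cast; ring
  have hasc (i : ℕ) : ∑ j ∈ range (n + 1), (stirling1 n j : ℚ) * ((i : ℚ) + 1) ^ j =
      (i + 1).ascFactorial n := by
    simp_rw [stirling1_eq_stirlingFirst, Nat.sum_stirlingFirst_mul_pow,
      Nat.ascFactorial_eq_prod_range]
    push_cast
    rfl
  simp only [scrB, pbPoly, pbEGF, ← expNegQ_pow, hexp, coeff_mul_liEGF_neg]
  simp_rw [mul_sum, pow_add]
  rw [sum_comm]
  refine sum_congr rfl fun i _ => ?_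
  rw [← hasc i, sum_mul, sum_mul, mul_sum]
  refine sum_congr rfl fun j _ => ?_
  ring

noncomputable def eNegY : ℚ⟦X⟧⟦X⟧ := PowerSeries.map C expNegQ

theorem eY_mul_eNegY : eY * eNegY = 1 := by
  have hexp : exp ℚ * rescale (-1) (exp ℚ) = 1 := exp_mul_exp_neg_eq_one
  have heY : eY = PowerSeries.map C expQ := by
    ext m : 1
    rw [eY, coeff_map, coeff_exp, expQ, coeff_exp, PowerSeries.algebraMap_apply]
  rw [heY, eNegY, ← map_mul, expNegQ, expQ, hexp, map_one]

theorem X_dvd_one_sub_eNegY : X ∣ 1 - eNegY := by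
  simpa [eNegY] using map_dvd (PowerSeries.map C) X_dvd_one_sub_expNegQ

noncomputable def scrBTerm (n i : ℕ) : ℚ⟦X⟧⟦X⟧ :=
  (i + 1).ascFactorial n * eX ^ (i + 1) * eNegY ^ n * (1 - eNegY) ^ i

theorem X_pow_dvd_scrBTerm (n i : ℕ) : X ^ i ∣ scrBTerm n i :=
  (pow_dvd_pow_of_dvd X_dvd_one_sub_eNegY i).mul_left _

theorem coeff_scrBTerm (n i m : ℕ) :
    coeff m (scrBTerm n i) =
      C (((i + 1).ascFactorial n : ℚ) * coeff m (expNegQ ^ n * (1 - expNegQ) ^ i)) *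
        expQ ^ (i + 1) := by
  have hsplit : scrBTerm n i = C (C ((i + 1).ascFactorial n : ℚ) * expQ ^ (i + 1)) *
      PowerSeries.map C (expNegQ ^ n * (1 - expNegQ) ^ i) := by
    simp only [scrBTerm, eX, eNegY, map_mul, map_pow, map_sub, map_one, map_natCast]
    ring
  rw [hsplit, coeff_C_mul, coeff_map, map_mul C]
  ring

theorem coeff_scrB_egf (n m : ℕ) :
    coeff m (mk fun m => mk fun l => scrB l m n / ((l.factorial : ℚ) * m.factorial)) =
      ∑ i ∈ range (m + 1), coeff m (scrBTerm n i) := by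
  ext l
  simp only [coeff_mk, coeff_scrBTerm, map_sum, coeff_C_mul, coeff_expQ_pow, scrB_eq_sum]
  rw [mul_comm (l.factorial : ℚ), ← div_div, mul_div_cancel_left₀ _ (by positivity), sum_div]
  refine sum_congr rfl fun i _ => ?_
  push_cast
  ring

theorem sum_scrBTerm_mul_sub (n N : ℕ) :
    (∑ i ∈ range N, scrBTerm n i) * (eX + eY - eX * eY) ^ (n + 1) - n.factorial * (eX * eY) =
      n.factorial * (eX * eY) *
        ((∑ i ∈ range N, ((n + i).choose n : ℚ⟦X⟧⟦X⟧) * (eX * (1 - eNegY)) ^ i) *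
          (1 - eX * (1 - eNegY)) ^ (n + 1) - 1) := by
  have hD : eX + eY - eX * eY = eY * (1 - eX * (1 - eNegY)) := by
    linear_combination (-eX) * eY_mul_eNegY
  have hun : (eY * eNegY) ^ n = 1 := by rw [eY_mul_eNegY, one_pow]
  have hasc (i : ℕ) : ((i + 1).ascFactorial n : ℚ⟦X⟧⟦X⟧) = n.factorial * (n + i).choose n := by
    rw [Nat.ascFactorial_eq_factorial_mul_choose, add_comm i n, Nat.cast_mul]
  have hsum : ∑ i ∈ range N, scrBTerm n i = n.factorial * eX * eNegY ^ n *
      ∑ i ∈ range N, ((n + i).choose n : ℚ⟦X⟧⟦X⟧) * (eX * (1 - eNegY)) ^ i := by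
    rw [mul_sum]
    refine sum_congr rfl fun i _ => ?_
    rw [scrBTerm, hasc, mul_pow]
    ring
  rw [hsum, hD, mul_pow]
  linear_combination (n.factorial * eX * eY * (1 - eX * (1 - eNegY)) ^ (n + 1) *
    ∑ i ∈ range N, ((n + i).choose n : ℚ⟦X⟧⟦X⟧) * (eX * (1 - eNegY)) ^ i) * hun

/-- ∑_{l,m≥0} 𝓑_m^{(-l)}(n) x^l y^m/(l! m!) = n! e^{x+y}/(e^x+e^y-e^{x+y})^{n+1}. -/
theorem scrB_egf (n : ℕ) :
    (PowerSeries.mk fun m => PowerSeries.mk fun l =>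
        scrB l m n / ((l.factorial : ℚ) * m.factorial) : PowerSeries (PowerSeries ℚ)) =
      (n.factorial : PowerSeries (PowerSeries ℚ)) * (eX * eY) *
        Ring.inverse ((eX + eY - eX * eY) ^ (n + 1)) := by
  have hDunit : IsUnit ((eX + eY - eX * eY) ^ (n + 1)) :=
    (isUnit_iff_constantCoeff.mpr (by simp [eY])).pow _
  rw [Ring.eq_mul_inverse_iff_mul_eq _ _ _ hDunit]
  refine eq_of_forall_X_pow_dvd_sub fun N => ?_
  rw [← sub_add_sub_cancel _ ((∑ i ∈ range N, scrBTerm n i) * (eX + eY - eX * eY) ^ (n + 1)),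
    ← sub_mul, sum_scrBTerm_mul_sub]
  have hz : X ∣ eX * (1 - eNegY) := X_dvd_one_sub_eNegY.mul_left eX
  exact dvd_add
    ((X_pow_dvd_sub_sum_range (X_pow_dvd_scrBTerm n) (coeff_scrB_egf n) N).mul_right _)
    (((pow_dvd_pow_of_dvd hz N).trans
      (pow_dvd_sum_choose_mul_one_sub_pow_sub_one _ n N)).mul_left _)
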